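/- Let R be an integral domain of characteristic zero with binomial closure R^bin and canonical injection ι : R → R^bin, and let S be a binomial ring. Then for every ring homomorphism φ : R → S there exists a ring homomorphism φ' : R^bin → S with φ' ∘ ι = φ. -/

import Mathlib

/-- The multiplicative set of nonzero elements of the image of `ℤ` in `R`. -/
def intNonzero (R : Type*) [CommRing R] [IsDomain R] : Submonoid R where
  carrier := {r : R | (∃ m : ℤ, (m : R) = r) ∧ r ≠ 0}
  one_mem' := ⟨⟨1, by simp⟩, one_ne_zero⟩
  mul_mem' := by
    rintro a b ⟨⟨m, hm⟩, ha⟩ ⟨⟨k, hk⟩, hb⟩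
    exact ⟨⟨m * k, by push_cast; rw [hm, hk]⟩, mul_ne_zero ha hb⟩

/-- The binomial coefficient `C_x^n = x (x-1) ⋯ (x-n+1) / n!` in a commutative ring `L`
(where `n!` is invertible; `Ring.inverse` returns the inverse of a unit). -/
noncomputable def binom {L : Type*} [CommRing L] (x : L) (n : ℕ) : L :=
  (∏ i ∈ Finset.range n, (x - (i : L))) * Ring.inverse (n.factorial : L)

/-- A subring `B` of `L` is binomially closed if it contains all binomial
coefficients `C_x^n` for `x ∈ B`, `n : ℕ`. -/
def BinClosed {L : Type*} [CommRing L] (B : Subring L) : Prop :=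
  ∀ x ∈ B, ∀ n : ℕ, binom x n ∈ B

/-- The binomial closure of `R`: the smallest binomially closed subring of the
localization `L` of `R` at the nonzero integers containing the image of `R`. -/
noncomputable def binClosure (R : Type*) [CommRing R] [IsDomain R] [CharZero R] :
    Subring (Localization (intNonzero R)) :=
  sInf {B | BinClosed B ∧ (algebraMap R (Localization (intNonzero R))).range ≤ B}

/-- The canonical injection `ι : R → R^bin`. -/
noncomputable def iotaBin (R : Type*) [CommRing R] [IsDomain R] [CharZero R] :
    R →+* binClosure R :=
  (algebraMap R (Localization (intNonzero R))).codRestrict (binClosure R)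
    (fun r => Subring.mem_sInf.mpr fun _ hB => hB.2 ⟨r, rfl⟩)

/-- A binomial ring: an integral domain of characteristic zero in which each
`x (x-1) ⋯ (x-n+1)` is divisible by `n!`. (The domain and characteristic-zero
assumptions are carried as instance hypotheses where used.) -/
def IsBinomialRing (S : Type*) [CommRing S] : Prop :=
  ∀ (x : S) (n : ℕ), ∃ y : S, (n.factorial : S) * y = ∏ i ∈ Finset.range n, (x - (i : S))

/-!
`φ` extends to a map `ψ` from the localization `L` of `R` at the nonzero integers into the
fraction field `K` of `S`. Since `S` is binomial, the image of `S` in `K` is binomially closed,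
and so is its preimage under `ψ`, because ring maps between rings in which all `n!` are
invertible commute with `C^n`. This preimage contains `R`, hence `R^bin`, so `ψ` maps `R^bin` into
the image of the injection `S → K`.
-/

section Binom

variable {L : Type*} [CommRing L]

theorem eq_binom_iff {x y : L} {n : ℕ} (h : IsUnit (n.factorial : L)) :
    y = binom x n ↔ (n.factorial : L) * y = ∏ i ∈ Finset.range n, (x - (i : L)) := by
  rw [binom, Ring.eq_mul_inverse_iff_mul_eq _ _ _ h, mul_comm]

theorem map_binom {K : Type*} [CommRing K] (f : L →+* K) (x : L) {n : ℕ}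
    (h : IsUnit (n.factorial : L)) : f (binom x n) = binom (f x) n := by
  refine (eq_binom_iff (by simpa using h.map f)).mpr ?_
  rw [← map_natCast f, ← map_mul, (eq_binom_iff h).mp rfl, map_prod]
  simp only [map_sub, map_natCast]

theorem binom_mem_range {S : Type*} [CommRing S] (hS : IsBinomialRing S) (f : S →+* L) (s : S)
    {n : ℕ} (h : IsUnit (n.factorial : L)) : binom (f s) n ∈ f.range := by
  obtain ⟨y, hy⟩ := hS s n
  refine ⟨y, (eq_binom_iff h).mpr ?_⟩
  rw [← map_natCast f, ← map_mul, hy, map_prod]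
  simp only [map_sub, map_natCast]

theorem binClosed_range {S : Type*} [CommRing S] (hS : IsBinomialRing S) (f : S →+* L)
    (h : ∀ n : ℕ, IsUnit (n.factorial : L)) : BinClosed f.range := by
  rintro _ ⟨s, rfl⟩ n
  exact binom_mem_range hS f s (h n)

theorem BinClosed.comap {K : Type*} [CommRing K] {B : Subring K} (hB : BinClosed B)
    (f : L →+* K) (h : ∀ n : ℕ, IsUnit (n.factorial : L)) : BinClosed (B.comap f) := by
  intro x hx n
  rw [Subring.mem_comap, map_binom f x (h n)]
  exact hB _ hx n

end Binom

section IntNonzero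

variable {R : Type*} [CommRing R] [IsDomain R]

theorem isUnit_map_of_mem_intNonzero {K : Type*} [Field K] [CharZero K] (g : R →+* K) {r : R}
    (hr : r ∈ intNonzero R) : IsUnit (g r) := by
  obtain ⟨⟨m, rfl⟩, hm⟩ := hr
  rw [map_intCast, isUnit_iff_ne_zero, Int.cast_ne_zero]
  rintro rfl
  exact hm Int.cast_zero

theorem isUnit_natCast_localization_intNonzero {n : ℕ} (hn : (n : R) ≠ 0) :
    IsUnit (n : Localization (intNonzero R)) := by
  simpa using IsLocalization.map_units (Localization (intNonzero R))
    (⟨n, ⟨n, Int.cast_natCast n⟩, hn⟩ : intNonzero R)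

theorem binClosure_le [CharZero R] {B : Subring (Localization (intNonzero R))}
    (hB : BinClosed B) (hR : (algebraMap R (Localization (intNonzero R))).range ≤ B) :
    binClosure R ≤ B :=
  sInf_le ⟨hB, hR⟩

end IntNonzero

theorem Subring.exists_lift_of_le_comap_range {A S K : Type*} [Ring A] [Ring S] [Ring K]
    (ψ : A →+* K) {i : S →+* K} (hi : Function.Injective i) {B : Subring A}
    (hB : B ≤ i.range.comap ψ) : ∃ φ : B →+* S, ∀ b, i (φ b) = ψ b := by
  classical
  let e := RingEquiv.ofLeftInverse (Function.leftInverse_invFun hi)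
  refine ⟨e.symm.toRingHom.comp ((ψ.comp B.subtype).codRestrict _ fun b => hB b.2),
    fun b => ?_⟩
  simp only [RingHom.coe_comp, Function.comp_apply, RingEquiv.toRingHom_eq_coe, RingHom.coe_coe,
    e, RingEquiv.ofLeftInverse_symm_apply]
  exact Function.invFun_eq (hB b.2)

/-- for any binomial ring `S` and any ring homomorphism `φ : R → S`,
there exists a ring homomorphism `φ' : R^bin → S` with `φ' ∘ ι = φ`. -/
theorem binClosure_hom_extension (R S : Type*) [CommRing R] [IsDomain R] [CharZero R]
    [CommRing S] [IsDomain S] [CharZero S] (hS : IsBinomialRing S) (φ : R →+* S) :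
    ∃ φ' : binClosure R →+* S, φ'.comp (iotaBin R) = φ := by
  let K := FractionRing S
  let ψ : Localization (intNonzero R) →+* K := IsLocalization.lift (M := intNonzero R)
    fun r => isUnit_map_of_mem_intNonzero ((algebraMap S K).comp φ) r.2
  have hψ (r : R) : ψ (algebraMap R _ r) = algebraMap S K (φ r) := IsLocalization.lift_eq _ r
  have hfactorial (n : ℕ) : IsUnit (n.factorial : Localization (intNonzero R)) :=
    isUnit_natCast_localization_intNonzero (by exact_mod_cast n.factorial_ne_zero)
  have hfactorialK (n : ℕ) : IsUnit (n.factorial : K) :=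
    (Nat.cast_ne_zero.mpr n.factorial_ne_zero).isUnit
  have hle : binClosure R ≤ (algebraMap S K).range.comap ψ :=
    binClosure_le ((binClosed_range hS _ hfactorialK).comap ψ hfactorial)
      (by rintro _ ⟨r, rfl⟩; exact ⟨φ r, (hψ r).symm⟩)
  obtain ⟨φ', hφ'⟩ :=
    Subring.exists_lift_of_le_comap_range ψ (IsFractionRing.injective S K) hle
  refine ⟨φ', RingHom.ext fun r => IsFractionRing.injective S K ?_⟩
  rw [RingHom.comp_apply, hφ']
  exact hψ r
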